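/- Let R ∈ IRel_m and S ∈ IRel_n. Then {T ∈ IRel_{m+n} : underprod(R,S) ≼ T} = ⋃ (U ⧢ V) over all U ∈ IRel_m with R ≼ U and all V ∈ IRel_n with S ≼ V, and dually {T ∈ IRel_{m+n} : T ≼ overprod(R,S)} = ⋃ (U ⧢ V) over all U ∈ IRel_m with U ≼ R and all V ∈ IRel_n with V ≼ S; in both cases the union is disjoint: each T belongs to U ⧢ V for exactly one pair (U,V). -/
import Mathlib


namespace IntegerRelations

/-- An integer relation of size `p` is a reflexive binary relation on `Fin p`,
encoded as a set of pairs; `IsIRel R` says that `R` is reflexive. -/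
def IsIRel {p : ℕ} (R : Set (Fin p × Fin p)) : Prop :=
  ∀ i : Fin p, (i, i) ∈ R

/-- The increasing subrelation `Inc R`. -/
def inc {p : ℕ} (R : Set (Fin p × Fin p)) : Set (Fin p × Fin p) :=
  {x ∈ R | x.1 < x.2}

/-- The decreasing subrelation `Dec R`. -/
def dec {p : ℕ} (R : Set (Fin p × Fin p)) : Set (Fin p × Fin p) :=
  {x ∈ R | x.2 < x.1}

/-- The weak order: `R ≼ S` iff `Inc R ⊇ Inc S` and `Dec R ⊆ Dec S`. -/
def WOle {p : ℕ} (R S : Set (Fin p × Fin p)) : Prop :=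
  inc S ⊆ inc R ∧ dec R ⊆ dec S

/-- Standardized restriction of a relation to a subset `X` of cardinality `k`. -/
def restrict {p k : ℕ} (R : Set (Fin p × Fin p)) (X : Finset (Fin p))
    (h : X.card = k) : Set (Fin k × Fin k) :=
  {x | ((X.orderIsoOfFin h x.1 : Fin p), (X.orderIsoOfFin h x.2 : Fin p)) ∈ R}

/-- Standardized restriction of a relation to the block of `k` consecutive
positions starting at offset `o` (`0`-indexed). -/
def restrictRange {p : ℕ} (R : Set (Fin p × Fin p)) (o k : ℕ) :
    Set (Fin k × Fin k) :=
  {x | ∃ (h₁ : o + (x.1 : ℕ) < p) (h₂ : o + (x.2 : ℕ) < p),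
      ((⟨o + (x.1 : ℕ), h₁⟩ : Fin p), (⟨o + (x.2 : ℕ), h₂⟩ : Fin p)) ∈ R}

/-- The relation `R` placed on the first `m` values of `[m+n]`. -/
def shiftL {m n : ℕ} (R : Set (Fin m × Fin m)) :
    Set (Fin (m + n) × Fin (m + n)) :=
  {x | ∃ y ∈ R, x = (Fin.castAdd n y.1, Fin.castAdd n y.2)}

/-- The relation `S` shifted to the last `n` values of `[m+n]`. -/
def shiftR {m n : ℕ} (S : Set (Fin n × Fin n)) :
    Set (Fin (m + n) × Fin (m + n)) :=
  {x | ∃ y ∈ S, x = (Fin.natAdd m y.1, Fin.natAdd m y.2)}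

/-- The full block `[m] × [n̄]`. -/
def lowHigh (m n : ℕ) : Set (Fin (m + n) × Fin (m + n)) :=
  {x | (x.1 : ℕ) < m ∧ m ≤ (x.2 : ℕ)}

/-- The full block `[n̄] × [m]`. -/
def highLow (m n : ℕ) : Set (Fin (m + n) × Fin (m + n)) :=
  {x | m ≤ (x.1 : ℕ) ∧ (x.2 : ℕ) < m}

/-- The shifted shuffle `R ⧢ S` of two integer relations. -/
def shiftedShuffle {m n : ℕ} (R : Set (Fin m × Fin m)) (S : Set (Fin n × Fin n)) :
    Set (Set (Fin (m + n) × Fin (m + n))) :=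
  {T | ∃ I D : Set (Fin (m + n) × Fin (m + n)),
      I ⊆ lowHigh m n ∧ D ⊆ highLow m n ∧
      T = shiftL R ∪ shiftR S ∪ I ∪ D}

/-- `underprod R S = R ∪ S̄ ∪ ([m] × [n̄])`. -/
def underprod {m n : ℕ} (R : Set (Fin m × Fin m)) (S : Set (Fin n × Fin n)) :
    Set (Fin (m + n) × Fin (m + n)) :=
  shiftL R ∪ shiftR S ∪ lowHigh m n

/-- `overprod R S = R ∪ S̄ ∪ ([n̄] × [m])`. -/
def overprod {m n : ℕ} (R : Set (Fin m × Fin m)) (S : Set (Fin n × Fin n)) :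
    Set (Fin (m + n) × Fin (m + n)) :=
  shiftL R ∪ shiftR S ∪ highLow m n

/-- A total cut `(X, Y)` of a relation `T`. -/
def IsTotalCut {p : ℕ} (T : Set (Fin p × Fin p)) (X Y : Finset (Fin p)) : Prop :=
  (∀ i : Fin p, i ∈ X ∨ i ∈ Y) ∧ Disjoint X Y ∧
    ∀ x ∈ X, ∀ y ∈ Y, (x, y) ∈ T ∧ (y, x) ∉ T

/-- The convolution `R ∗ S` of two integer relations. -/
def convolution {m n : ℕ} (R : Set (Fin m × Fin m)) (S : Set (Fin n × Fin n)) :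
    Set (Set (Fin (m + n) × Fin (m + n))) :=
  {T | ∃ (X Y : Finset (Fin (m + n))) (hX : X.card = m) (hY : Y.card = n),
      IsTotalCut T X Y ∧ restrict T X hX = R ∧ restrict T Y hY = S}

/-- An integer poset: a reflexive, antisymmetric and transitive integer relation. -/
def IsIPos {p : ℕ} (T : Set (Fin p × Fin p)) : Prop :=
  IsIRel T ∧ (∀ a b : Fin p, (a, b) ∈ T → (b, a) ∈ T → a = b) ∧
    ∀ a b c : Fin p, (a, b) ∈ T → (b, c) ∈ T → (a, c) ∈ T

/-- A total order: an integer poset in which any two elements are comparable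
(these are exactly the weak order element posets, `WOEP`). -/
def IsITotal {p : ℕ} (T : Set (Fin p × Fin p)) : Prop :=
  IsIPos T ∧ ∀ a b : Fin p, (a, b) ∈ T ∨ (b, a) ∈ T

/-- `T` admits a primitive cut at `k` (here positions are `0`-indexed, so the
`1`-indexed condition `i ≤ k < j` reads `i < k ≤ j`). -/
def HasPrimitiveCutAt {p : ℕ} (T : Set (Fin p × Fin p)) (k : ℕ) : Prop :=
  ∀ i j : Fin p, (i : ℕ) < k → k ≤ (j : ℕ) → (i, j) ∈ T ∧ (j, i) ∉ T

/-- `T` is under-indecomposable: no non-trivial primitive cut. -/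
def UnderIndecomposable {p : ℕ} (T : Set (Fin p × Fin p)) : Prop :=
  ∀ k : ℕ, 0 < k → k < p → ¬ HasPrimitiveCutAt T k

/-- Membership in `IWOIP`. -/
def InIWOIP {p : ℕ} (T : Set (Fin p × Fin p)) : Prop :=
  IsIPos T ∧ ∀ a b c : Fin p, a < b → b < c → (a, c) ∈ T → (a, b) ∈ T ∨ (b, c) ∈ T

/-- Membership in `DWOIP`. -/
def InDWOIP {p : ℕ} (T : Set (Fin p × Fin p)) : Prop :=
  IsIPos T ∧ ∀ a b c : Fin p, a < b → b < c → (c, a) ∈ T → (b, a) ∈ T ∨ (c, b) ∈ T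

/-- Membership in `WOIP = IWOIP ∩ DWOIP`. -/
def InWOIP {p : ℕ} (T : Set (Fin p × Fin p)) : Prop := InIWOIP T ∧ InDWOIP T

/-- Membership in `WOFP`. -/
def InWOFP {p : ℕ} (T : Set (Fin p × Fin p)) : Prop :=
  InWOIP T ∧ ∀ a b c : Fin p, a < b → b < c → (a, c) ∉ T → (c, a) ∉ T →
    (((a, b) ∈ T ↔ (c, b) ∈ T) ∧ ((b, a) ∈ T ↔ (b, c) ∈ T))

/-- The `IWOIP` increasing deletion. -/
def IWOIPid {p : ℕ} (T : Set (Fin p × Fin p)) : Set (Fin p × Fin p) :=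
  T \ {x | x.1 < x.2 ∧ ∃ l : List (Fin p), l ≠ [] ∧
      List.Chain (fun a b : Fin p => a < b ∧ (a, b) ∉ T) x.1 (l ++ [x.2])}

/-- The `DWOIP` decreasing deletion. -/
def DWOIPdd {p : ℕ} (T : Set (Fin p × Fin p)) : Set (Fin p × Fin p) :=
  T \ {x | x.2 < x.1 ∧ ∃ l : List (Fin p), l ≠ [] ∧
      List.Chain (fun a b : Fin p => a < b ∧ (b, a) ∉ T) x.2 (l ++ [x.1])}

/-- The `WOIP` deletion. -/
def WOIPd {p : ℕ} (T : Set (Fin p × Fin p)) : Set (Fin p × Fin p) :=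
  IWOIPid (DWOIPdd T)

/-- The chain poset `≺_σ` of a permutation: `u ≺_σ v` iff `σ⁻¹ u ≤ σ⁻¹ v`. -/
def chainPoset {p : ℕ} (σ : Equiv.Perm (Fin p)) : Set (Fin p × Fin p) :=
  {x | σ.symm x.1 ≤ σ.symm x.2}

/-- The shifted shuffle of two permutations. -/
def permShiftedShuffle {m n : ℕ} (σ : Equiv.Perm (Fin m)) (τ : Equiv.Perm (Fin n)) :
    Set (Equiv.Perm (Fin (m + n))) :=
  {ρ | (∀ u v : Fin m,
        ρ.symm (Fin.castAdd n u) < ρ.symm (Fin.castAdd n v) ↔ σ.symm u < σ.symm v) ∧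
      ∀ u v : Fin n,
        ρ.symm (Fin.natAdd m u) < ρ.symm (Fin.natAdd m v) ↔ τ.symm u < τ.symm v}

/-- The convolution of two permutations. -/
def permConvolution {m n : ℕ} (σ : Equiv.Perm (Fin m)) (τ : Equiv.Perm (Fin n)) :
    Set (Equiv.Perm (Fin (m + n))) :=
  {ρ | (∀ i j : Fin m, ρ (Fin.castAdd n i) < ρ (Fin.castAdd n j) ↔ σ i < σ j) ∧
      ∀ i j : Fin n, ρ (Fin.natAdd m i) < ρ (Fin.natAdd m j) ↔ τ i < τ j}

/-- Relabelling of a relation along a bijection. -/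
def relabel {p q : ℕ} (e : Fin p ≃ Fin q) (T : Set (Fin p × Fin p)) :
    Set (Fin q × Fin q) :=
  {x | (e.symm x.1, e.symm x.2) ∈ T}

/-- The diagonal `Δ_p`. -/
def diagonal (p : ℕ) : Set (Fin p × Fin p) := {x | x.1 = x.2}

/-- Restriction of a relation on `Fin (m+n)` to the first `m` values. -/
def lowRes {m n : ℕ} (T : Set (Fin (m + n) × Fin (m + n))) : Set (Fin m × Fin m) :=
  {x | (Fin.castAdd n x.1, Fin.castAdd n x.2) ∈ T}

/-- Restriction of a relation on `Fin (m+n)` to the last `n` values. -/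
def highRes {m n : ℕ} (T : Set (Fin (m + n) × Fin (m + n))) : Set (Fin n × Fin n) :=
  {x | (Fin.natAdd m x.1, Fin.natAdd m x.2) ∈ T}

lemma mem_shiftL' {m n : ℕ} {U : Set (Fin m × Fin m)} {x : Fin (m + n) × Fin (m + n)} :
    x ∈ shiftL (n := n) U ↔
      ∃ a b : Fin m, (a, b) ∈ U ∧ x.1 = Fin.castAdd n a ∧ x.2 = Fin.castAdd n b := by
  constructor
  · rintro ⟨⟨a, b⟩, h, rfl⟩; exact ⟨a, b, h, rfl, rfl⟩
  · rintro ⟨a, b, h, h1, h2⟩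
    exact ⟨(a, b), h, Prod.ext_iff.mpr ⟨h1, h2⟩⟩

lemma mem_shiftR' {m n : ℕ} {V : Set (Fin n × Fin n)} {x : Fin (m + n) × Fin (m + n)} :
    x ∈ shiftR (m := m) V ↔
      ∃ a b : Fin n, (a, b) ∈ V ∧ x.1 = Fin.natAdd m a ∧ x.2 = Fin.natAdd m b := by
  constructor
  · rintro ⟨⟨a, b⟩, h, rfl⟩; exact ⟨a, b, h, rfl, rfl⟩
  · rintro ⟨a, b, h, h1, h2⟩
    exact ⟨(a, b), h, Prod.ext_iff.mpr ⟨h1, h2⟩⟩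

lemma mem_shuffle_iff {m n : ℕ} (U : Set (Fin m × Fin m)) (V : Set (Fin n × Fin n))
    (T : Set (Fin (m + n) × Fin (m + n))) :
    T ∈ shiftedShuffle U V ↔ lowRes T = U ∧ highRes T = V := by
  constructor
  · rintro ⟨I, D, hI, hD, rfl⟩
    constructor
    · ext ⟨a, b⟩
      simp only [lowRes, Set.mem_setOf_eq, Set.mem_union]
      constructor
      · rintro (((h | h) | h) | h)
        · obtain ⟨a', b', hu, h1, h2⟩ := mem_shiftL'.mp h
          have e1 : a = a' := Fin.ext (by simpa using congrArg Fin.val h1)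
          have e2 : b = b' := Fin.ext (by simpa using congrArg Fin.val h2)
          rw [e1, e2]; exact hu
        · obtain ⟨a', b', hu, h1, h2⟩ := mem_shiftR'.mp h
          have := congrArg Fin.val h1
          simp only [Fin.coe_castAdd, Fin.coe_natAdd] at this
          have := a.isLt; omega
        · have := hI h
          have hb := b.isLt
          simp only [lowHigh, Set.mem_setOf_eq, Fin.coe_castAdd] at this
          omega
        · have := hD h
          have ha := a.isLt
          simp only [highLow, Set.mem_setOf_eq, Fin.coe_castAdd] at this
          omega
      · intro h
        exact Or.inl (Or.inl (Or.inl (mem_shiftL'.mpr ⟨a, b, h, rfl, rfl⟩)))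
    · ext ⟨a, b⟩
      simp only [highRes, Set.mem_setOf_eq, Set.mem_union]
      constructor
      · rintro (((h | h) | h) | h)
        · obtain ⟨a', b', hu, h1, h2⟩ := mem_shiftL'.mp h
          have := congrArg Fin.val h1
          simp only [Fin.coe_castAdd, Fin.coe_natAdd] at this
          have := a'.isLt; omega
        · obtain ⟨a', b', hu, h1, h2⟩ := mem_shiftR'.mp h
          have e1 : a = a' := Fin.ext (by
            have := congrArg Fin.val h1
            simp only [Fin.coe_natAdd] at this; omega)
          have e2 : b = b' := Fin.ext (by
            have := congrArg Fin.val h2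
            simp only [Fin.coe_natAdd] at this; omega)
          rw [e1, e2]; exact hu
        · have := hI h
          simp only [lowHigh, Set.mem_setOf_eq, Fin.coe_natAdd] at this
          omega
        · have := hD h
          simp only [highLow, Set.mem_setOf_eq, Fin.coe_natAdd] at this
          omega
      · intro h
        exact Or.inl (Or.inl (Or.inr (mem_shiftR'.mpr ⟨a, b, h, rfl, rfl⟩)))
  · rintro ⟨rfl, rfl⟩
    refine ⟨T ∩ lowHigh m n, T ∩ highLow m n, Set.inter_subset_right,
      Set.inter_subset_right, ?_⟩
    ext ⟨a, b⟩
    constructor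
    · intro h
      by_cases ha : (a : ℕ) < m <;> by_cases hb : (b : ℕ) < m
      · refine Or.inl (Or.inl (Or.inl (mem_shiftL'.mpr
          ⟨⟨a, ha⟩, ⟨b, hb⟩, ?_, Fin.ext rfl, Fin.ext rfl⟩)))
        show (Fin.castAdd n ⟨(a : ℕ), ha⟩, Fin.castAdd n ⟨(b : ℕ), hb⟩) ∈ T
        have e1 : Fin.castAdd n ⟨(a : ℕ), ha⟩ = a := Fin.ext rfl
        have e2 : Fin.castAdd n ⟨(b : ℕ), hb⟩ = b := Fin.ext rfl
        rw [e1, e2]; exact h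
      · exact Or.inl (Or.inr ⟨h, ha, le_of_not_gt hb⟩)
      · exact Or.inr ⟨h, le_of_not_gt ha, hb⟩
      · have ha' := a.isLt
        have hb' := b.isLt
        refine Or.inl (Or.inl (Or.inr (mem_shiftR'.mpr
          ⟨⟨(a : ℕ) - m, by omega⟩, ⟨(b : ℕ) - m, by omega⟩, ?_,
            Fin.ext (by simp; omega), Fin.ext (by simp; omega)⟩)))
        show (Fin.natAdd m ⟨(a : ℕ) - m, _⟩, Fin.natAdd m ⟨(b : ℕ) - m, _⟩) ∈ T
        have e1 : Fin.natAdd m ⟨(a : ℕ) - m, by omega⟩ = a := Fin.ext (by simp; omega)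
        have e2 : Fin.natAdd m ⟨(b : ℕ) - m, by omega⟩ = b := Fin.ext (by simp; omega)
        rw [e1, e2]; exact h
    · rintro (((h | h) | h) | h)
      · obtain ⟨a', b', hu, h1, h2⟩ := mem_shiftL'.mp h
        rw [show ((a, b) : _ × _) = (Fin.castAdd n a', Fin.castAdd n b') from
          Prod.ext_iff.mpr ⟨h1, h2⟩]
        exact hu
      · obtain ⟨a', b', hu, h1, h2⟩ := mem_shiftR'.mp h
        rw [show ((a, b) : _ × _) = (Fin.natAdd m a', Fin.natAdd m b') from
          Prod.ext_iff.mpr ⟨h1, h2⟩]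
        exact hu
      · exact h.1
      · exact h.1

lemma irel_iff {m n : ℕ} (T : Set (Fin (m + n) × Fin (m + n))) :
    IsIRel T ↔ IsIRel (lowRes T) ∧ IsIRel (highRes T) := by
  constructor
  · intro h
    exact ⟨fun i => h _, fun i => h _⟩
  · rintro ⟨h1, h2⟩ i
    by_cases hi : (i : ℕ) < m
    · have e : Fin.castAdd n ⟨(i : ℕ), hi⟩ = i := Fin.ext rfl
      have h' : (Fin.castAdd n ⟨(i : ℕ), hi⟩, Fin.castAdd n ⟨(i : ℕ), hi⟩) ∈ T :=
        h1 ⟨(i : ℕ), hi⟩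
      rwa [e] at h'
    · have hi' := i.isLt
      have e : Fin.natAdd m ⟨(i : ℕ) - m, by omega⟩ = i := Fin.ext (by simp; omega)
      have h' : (Fin.natAdd m ⟨(i : ℕ) - m, by omega⟩,
          Fin.natAdd m ⟨(i : ℕ) - m, by omega⟩) ∈ T := h2 ⟨(i : ℕ) - m, by omega⟩
      rwa [e] at h'

lemma wole_under_iff {m n : ℕ} (R : Set (Fin m × Fin m)) (S : Set (Fin n × Fin n))
    (T : Set (Fin (m + n) × Fin (m + n))) :
    WOle (underprod R S) T ↔ WOle R (lowRes T) ∧ WOle S (highRes T) := by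
  constructor
  · rintro ⟨hinc, hdec⟩
    refine ⟨⟨?_, ?_⟩, ?_, ?_⟩
    · rintro ⟨a, b⟩ ⟨hmem, hab⟩
      have hT : (Fin.castAdd n a, Fin.castAdd n b) ∈ inc T :=
        ⟨hmem, hab⟩
      obtain ⟨hu, hlt⟩ := hinc hT
      rcases hu with (h | h) | h
      · obtain ⟨a', b', hu, h1, h2⟩ := mem_shiftL'.mp h
        have e1 : a = a' := Fin.ext (by simpa using congrArg Fin.val h1)
        have e2 : b = b' := Fin.ext (by simpa using congrArg Fin.val h2)
        exact ⟨by rw [e1, e2]; exact hu, hab⟩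
      · obtain ⟨a', b', hu, h1, h2⟩ := mem_shiftR'.mp h
        have := congrArg Fin.val h1
        simp only [Fin.coe_castAdd, Fin.coe_natAdd] at this
        have := a.isLt; omega
      · simp only [lowHigh, Set.mem_setOf_eq, Fin.coe_castAdd] at h
        have := b.isLt; omega
    · rintro ⟨a, b⟩ ⟨hmem, hba⟩
      have h1 : (Fin.castAdd n a, Fin.castAdd n b) ∈ dec (underprod R S) :=
        ⟨Or.inl (Or.inl (mem_shiftL'.mpr ⟨a, b, hmem, rfl, rfl⟩)), hba⟩
      obtain ⟨hT, _⟩ := hdec h1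
      exact ⟨hT, hba⟩
    · rintro ⟨a, b⟩ ⟨hmem, hab⟩
      have hT : (Fin.natAdd m a, Fin.natAdd m b) ∈ inc T :=
        ⟨hmem, Nat.add_lt_add_left hab m⟩
      obtain ⟨hu, hlt⟩ := hinc hT
      rcases hu with (h | h) | h
      · obtain ⟨a', b', hu, h1, h2⟩ := mem_shiftL'.mp h
        have := congrArg Fin.val h1
        simp only [Fin.coe_castAdd, Fin.coe_natAdd] at this
        have := a'.isLt; omega
      · obtain ⟨a', b', hu, h1, h2⟩ := mem_shiftR'.mp h
        have e1 : a = a' := Fin.ext (by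
          have := congrArg Fin.val h1
          simp only [Fin.coe_natAdd] at this; omega)
        have e2 : b = b' := Fin.ext (by
          have := congrArg Fin.val h2
          simp only [Fin.coe_natAdd] at this; omega)
        exact ⟨by rw [e1, e2]; exact hu, hab⟩
      · simp only [lowHigh, Set.mem_setOf_eq, Fin.coe_natAdd] at h
        omega
    · rintro ⟨a, b⟩ ⟨hmem, hba⟩
      have h1 : (Fin.natAdd m a, Fin.natAdd m b) ∈ dec (underprod R S) :=
        ⟨Or.inl (Or.inr (mem_shiftR'.mpr ⟨a, b, hmem, rfl, rfl⟩)), Nat.add_lt_add_left hba m⟩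
      obtain ⟨hT, _⟩ := hdec h1
      exact ⟨hT, hba⟩
  · rintro ⟨⟨hIncR, hDecR⟩, hIncS, hDecS⟩
    constructor
    · rintro ⟨a, b⟩ ⟨hT, hab⟩
      have hab' : (a : ℕ) < (b : ℕ) := Fin.lt_def.mp hab
      by_cases ha : (a : ℕ) < m <;> by_cases hb : (b : ℕ) < m
      · have e1 : Fin.castAdd n ⟨(a : ℕ), ha⟩ = a := Fin.ext rfl
        have e2 : Fin.castAdd n ⟨(b : ℕ), hb⟩ = b := Fin.ext rfl
        have hmem : ((⟨(a : ℕ), ha⟩ : Fin m), (⟨(b : ℕ), hb⟩ : Fin m)) ∈ inc (lowRes T) := by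
          refine ⟨?_, by simp [Fin.lt_def, hab']⟩
          show (Fin.castAdd n ⟨(a : ℕ), ha⟩, Fin.castAdd n ⟨(b : ℕ), hb⟩) ∈ T
          rw [e1, e2]; exact hT
        obtain ⟨hR', _⟩ := hIncR hmem
        exact ⟨Or.inl (Or.inl (mem_shiftL'.mpr
          ⟨_, _, hR', e1.symm, e2.symm⟩)), hab⟩
      · exact ⟨Or.inr ⟨ha, le_of_not_gt hb⟩, hab⟩
      · omega
      · have ha' := a.isLt
        have hb' := b.isLt
        have e1 : Fin.natAdd m ⟨(a : ℕ) - m, by omega⟩ = a := Fin.ext (by simp; omega)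
        have e2 : Fin.natAdd m ⟨(b : ℕ) - m, by omega⟩ = b := Fin.ext (by simp; omega)
        have hmem : ((⟨(a : ℕ) - m, by omega⟩ : Fin n), (⟨(b : ℕ) - m, by omega⟩ : Fin n))
            ∈ inc (highRes T) := by
          refine ⟨?_, by simp [Fin.lt_def]; omega⟩
          show (Fin.natAdd m ⟨(a : ℕ) - m, _⟩, Fin.natAdd m ⟨(b : ℕ) - m, _⟩) ∈ T
          rw [e1, e2]; exact hT
        obtain ⟨hS', _⟩ := hIncS hmem
        exact ⟨Or.inl (Or.inr (mem_shiftR'.mpr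
          ⟨_, _, hS', e1.symm, e2.symm⟩)), hab⟩
    · rintro ⟨a, b⟩ ⟨hmem, hba⟩
      have hba' : (b : ℕ) < (a : ℕ) := Fin.lt_def.mp hba
      rcases hmem with (h | h) | h
      · obtain ⟨a', b', hu, h1, h2⟩ := mem_shiftL'.mp h
        have hd : (a', b') ∈ dec R := by
          refine ⟨hu, ?_⟩
          have e1 : (a : ℕ) = (a' : ℕ) := congrArg Fin.val h1
          have e2 : (b : ℕ) = (b' : ℕ) := congrArg Fin.val h2
          show ((a', b').2 : ℕ) < ((a', b').1 : ℕ)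
          simp only
          omega
        obtain ⟨hT', hlt'⟩ := hDecR hd
        refine ⟨?_, hba⟩
        rw [show ((a, b) : _ × _) = (Fin.castAdd n a', Fin.castAdd n b') from
          Prod.ext_iff.mpr ⟨h1, h2⟩]
        exact hT'
      · obtain ⟨a', b', hu, h1, h2⟩ := mem_shiftR'.mp h
        have hd : (a', b') ∈ dec S := by
          refine ⟨hu, ?_⟩
          have e1 : (a : ℕ) = m + (a' : ℕ) := congrArg Fin.val h1
          have e2 : (b : ℕ) = m + (b' : ℕ) := congrArg Fin.val h2
          show ((a', b').2 : ℕ) < ((a', b').1 : ℕ)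
          simp only
          omega
        obtain ⟨hT', hlt'⟩ := hDecS hd
        refine ⟨?_, hba⟩
        rw [show ((a, b) : _ × _) = (Fin.natAdd m a', Fin.natAdd m b') from
          Prod.ext_iff.mpr ⟨h1, h2⟩]
        exact hT'
      · simp only [lowHigh, Set.mem_setOf_eq] at h
        omega

lemma wole_over_iff {m n : ℕ} (R : Set (Fin m × Fin m)) (S : Set (Fin n × Fin n))
    (T : Set (Fin (m + n) × Fin (m + n))) :
    WOle T (overprod R S) ↔ WOle (lowRes T) R ∧ WOle (highRes T) S := by
  constructor
  · rintro ⟨hinc, hdec⟩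
    refine ⟨⟨?_, ?_⟩, ?_, ?_⟩
    · rintro ⟨a, b⟩ ⟨hmem, hab⟩
      have h1 : (Fin.castAdd n a, Fin.castAdd n b) ∈ inc (overprod R S) :=
        ⟨Or.inl (Or.inl (mem_shiftL'.mpr ⟨a, b, hmem, rfl, rfl⟩)), hab⟩
      obtain ⟨hT, _⟩ := hinc h1
      exact ⟨hT, hab⟩
    · rintro ⟨a, b⟩ ⟨hmem, hba⟩
      have hT : (Fin.castAdd n a, Fin.castAdd n b) ∈ dec T :=
        ⟨hmem, hba⟩
      obtain ⟨hu, hlt⟩ := hdec hT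
      rcases hu with (h | h) | h
      · obtain ⟨a', b', hu, h1, h2⟩ := mem_shiftL'.mp h
        have e1 : a = a' := Fin.ext (by simpa using congrArg Fin.val h1)
        have e2 : b = b' := Fin.ext (by simpa using congrArg Fin.val h2)
        exact ⟨by rw [e1, e2]; exact hu, hba⟩
      · obtain ⟨a', b', hu, h1, h2⟩ := mem_shiftR'.mp h
        have := congrArg Fin.val h1
        simp only [Fin.coe_castAdd, Fin.coe_natAdd] at this
        have := a.isLt; omega
      · simp only [highLow, Set.mem_setOf_eq, Fin.coe_castAdd] at h
        have := a.isLt; omega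
    · rintro ⟨a, b⟩ ⟨hmem, hab⟩
      have h1 : (Fin.natAdd m a, Fin.natAdd m b) ∈ inc (overprod R S) :=
        ⟨Or.inl (Or.inr (mem_shiftR'.mpr ⟨a, b, hmem, rfl, rfl⟩)), Nat.add_lt_add_left hab m⟩
      obtain ⟨hT, _⟩ := hinc h1
      exact ⟨hT, hab⟩
    · rintro ⟨a, b⟩ ⟨hmem, hba⟩
      have hT : (Fin.natAdd m a, Fin.natAdd m b) ∈ dec T :=
        ⟨hmem, Nat.add_lt_add_left hba m⟩
      obtain ⟨hu, hlt⟩ := hdec hT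
      rcases hu with (h | h) | h
      · obtain ⟨a', b', hu, h1, h2⟩ := mem_shiftL'.mp h
        have := congrArg Fin.val h1
        simp only [Fin.coe_castAdd, Fin.coe_natAdd] at this
        have := a'.isLt; omega
      · obtain ⟨a', b', hu, h1, h2⟩ := mem_shiftR'.mp h
        have e1 : a = a' := Fin.ext (by
          have := congrArg Fin.val h1
          simp only [Fin.coe_natAdd] at this; omega)
        have e2 : b = b' := Fin.ext (by
          have := congrArg Fin.val h2
          simp only [Fin.coe_natAdd] at this; omega)
        exact ⟨by rw [e1, e2]; exact hu, hba⟩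
      · simp only [highLow, Set.mem_setOf_eq, Fin.coe_natAdd] at h
        omega
  · rintro ⟨⟨hIncR, hDecR⟩, hIncS, hDecS⟩
    constructor
    · rintro ⟨a, b⟩ ⟨hmem, hab⟩
      have hab' : (a : ℕ) < (b : ℕ) := Fin.lt_def.mp hab
      rcases hmem with (h | h) | h
      · obtain ⟨a', b', hu, h1, h2⟩ := mem_shiftL'.mp h
        have hi : (a', b') ∈ inc R := by
          refine ⟨hu, ?_⟩
          have e1 : (a : ℕ) = (a' : ℕ) := congrArg Fin.val h1
          have e2 : (b : ℕ) = (b' : ℕ) := congrArg Fin.val h2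
          show ((a', b').1 : ℕ) < ((a', b').2 : ℕ)
          simp only
          omega
        obtain ⟨hT', _⟩ := hIncR hi
        refine ⟨?_, hab⟩
        rw [show ((a, b) : _ × _) = (Fin.castAdd n a', Fin.castAdd n b') from
          Prod.ext_iff.mpr ⟨h1, h2⟩]
        exact hT'
      · obtain ⟨a', b', hu, h1, h2⟩ := mem_shiftR'.mp h
        have hi : (a', b') ∈ inc S := by
          refine ⟨hu, ?_⟩
          have e1 : (a : ℕ) = m + (a' : ℕ) := congrArg Fin.val h1
          have e2 : (b : ℕ) = m + (b' : ℕ) := congrArg Fin.val h2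
          show ((a', b').1 : ℕ) < ((a', b').2 : ℕ)
          simp only
          omega
        obtain ⟨hT', _⟩ := hIncS hi
        refine ⟨?_, hab⟩
        rw [show ((a, b) : _ × _) = (Fin.natAdd m a', Fin.natAdd m b') from
          Prod.ext_iff.mpr ⟨h1, h2⟩]
        exact hT'
      · simp only [highLow, Set.mem_setOf_eq] at h
        omega
    · rintro ⟨a, b⟩ ⟨hT, hba⟩
      have hba' : (b : ℕ) < (a : ℕ) := Fin.lt_def.mp hba
      by_cases ha : (a : ℕ) < m <;> by_cases hb : (b : ℕ) < m
      · have e1 : Fin.castAdd n ⟨(a : ℕ), ha⟩ = a := Fin.ext rfl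
        have e2 : Fin.castAdd n ⟨(b : ℕ), hb⟩ = b := Fin.ext rfl
        have hmem : ((⟨(a : ℕ), ha⟩ : Fin m), (⟨(b : ℕ), hb⟩ : Fin m)) ∈ dec (lowRes T) := by
          refine ⟨?_, by simp [Fin.lt_def, hba']⟩
          show (Fin.castAdd n ⟨(a : ℕ), ha⟩, Fin.castAdd n ⟨(b : ℕ), hb⟩) ∈ T
          rw [e1, e2]; exact hT
        obtain ⟨hR', _⟩ := hDecR hmem
        exact ⟨Or.inl (Or.inl (mem_shiftL'.mpr ⟨_, _, hR', e1.symm, e2.symm⟩)), hba⟩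
      · omega
      · exact ⟨Or.inr ⟨le_of_not_gt ha, hb⟩, hba⟩
      · have ha' := a.isLt
        have hb' := b.isLt
        have e1 : Fin.natAdd m ⟨(a : ℕ) - m, by omega⟩ = a := Fin.ext (by simp; omega)
        have e2 : Fin.natAdd m ⟨(b : ℕ) - m, by omega⟩ = b := Fin.ext (by simp; omega)
        have hmem : ((⟨(a : ℕ) - m, by omega⟩ : Fin n), (⟨(b : ℕ) - m, by omega⟩ : Fin n))
            ∈ dec (highRes T) := by
          refine ⟨?_, by simp [Fin.lt_def]; omega⟩
          show (Fin.natAdd m ⟨(a : ℕ) - m, _⟩, Fin.natAdd m ⟨(b : ℕ) - m, _⟩) ∈ T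
          rw [e1, e2]; exact hT
        obtain ⟨hS', _⟩ := hDecS hmem
        exact ⟨Or.inl (Or.inr (mem_shiftR'.mpr ⟨_, _, hS', e1.symm, e2.symm⟩)), hba⟩
/-- multiplicative bases — the product formulas for the
`E`-basis and the `H`-basis, with disjointness of the decompositions. -/
theorem multiplicative_bases (m n : ℕ)
    (R : Set (Fin m × Fin m)) (S : Set (Fin n × Fin n))
    (hR : IsIRel R) (hS : IsIRel S) :
    ({T : Set (Fin (m + n) × Fin (m + n)) | IsIRel T ∧ WOle (underprod R S) T}
      = ⋃ (U : Set (Fin m × Fin m)) (_ : IsIRel U ∧ WOle R U)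
          (V : Set (Fin n × Fin n)) (_ : IsIRel V ∧ WOle S V),
          shiftedShuffle U V) ∧
    ({T : Set (Fin (m + n) × Fin (m + n)) | IsIRel T ∧ WOle T (overprod R S)}
      = ⋃ (U : Set (Fin m × Fin m)) (_ : IsIRel U ∧ WOle U R)
          (V : Set (Fin n × Fin n)) (_ : IsIRel V ∧ WOle V S),
          shiftedShuffle U V) ∧
    (∀ T : Set (Fin (m + n) × Fin (m + n)), IsIRel T → WOle (underprod R S) T →
      ∃! UV : Set (Fin m × Fin m) × Set (Fin n × Fin n),
        (IsIRel UV.1 ∧ WOle R UV.1) ∧ (IsIRel UV.2 ∧ WOle S UV.2) ∧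
          T ∈ shiftedShuffle UV.1 UV.2) ∧
    (∀ T : Set (Fin (m + n) × Fin (m + n)), IsIRel T → WOle T (overprod R S) →
      ∃! UV : Set (Fin m × Fin m) × Set (Fin n × Fin n),
        (IsIRel UV.1 ∧ WOle UV.1 R) ∧ (IsIRel UV.2 ∧ WOle UV.2 S) ∧
          T ∈ shiftedShuffle UV.1 UV.2) := by
  refine ⟨?_, ?_, ?_, ?_⟩
  · ext T
    simp only [Set.mem_setOf_eq, Set.mem_iUnion]
    constructor
    · rintro ⟨hT, hle⟩
      rw [wole_under_iff] at hle
      rw [irel_iff] at hT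
      exact ⟨lowRes T, ⟨hT.1, hle.1⟩, highRes T, ⟨hT.2, hle.2⟩,
        (mem_shuffle_iff _ _ _).mpr ⟨rfl, rfl⟩⟩
    · rintro ⟨U, ⟨hU, hRU⟩, V, ⟨hV, hSV⟩, hT⟩
      obtain ⟨hU', hV'⟩ := (mem_shuffle_iff _ _ _).mp hT
      subst hU'; subst hV'
      exact ⟨(irel_iff T).mpr ⟨hU, hV⟩, (wole_under_iff R S T).mpr ⟨hRU, hSV⟩⟩
  · ext T
    simp only [Set.mem_setOf_eq, Set.mem_iUnion]
    constructor
    · rintro ⟨hT, hle⟩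
      rw [wole_over_iff] at hle
      rw [irel_iff] at hT
      exact ⟨lowRes T, ⟨hT.1, hle.1⟩, highRes T, ⟨hT.2, hle.2⟩,
        (mem_shuffle_iff _ _ _).mpr ⟨rfl, rfl⟩⟩
    · rintro ⟨U, ⟨hU, hRU⟩, V, ⟨hV, hSV⟩, hT⟩
      obtain ⟨hU', hV'⟩ := (mem_shuffle_iff _ _ _).mp hT
      subst hU'; subst hV'
      exact ⟨(irel_iff T).mpr ⟨hU, hV⟩, (wole_over_iff R S T).mpr ⟨hRU, hSV⟩⟩
  · intro T hT hle
    rw [wole_under_iff] at hle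
    rw [irel_iff] at hT
    refine ⟨(lowRes T, highRes T),
      ⟨⟨hT.1, hle.1⟩, ⟨hT.2, hle.2⟩, (mem_shuffle_iff _ _ _).mpr ⟨rfl, rfl⟩⟩, ?_⟩
    rintro ⟨U, V⟩ ⟨_, _, hmem⟩
    obtain ⟨h1, h2⟩ := (mem_shuffle_iff _ _ _).mp hmem
    exact Prod.ext_iff.mpr ⟨h1.symm, h2.symm⟩
  · intro T hT hle
    rw [wole_over_iff] at hle
    rw [irel_iff] at hT
    refine ⟨(lowRes T, highRes T),
      ⟨⟨hT.1, hle.1⟩, ⟨hT.2, hle.2⟩, (mem_shuffle_iff _ _ _).mpr ⟨rfl, rfl⟩⟩, ?_⟩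
    rintro ⟨U, V⟩ ⟨_, _, hmem⟩
    obtain ⟨h1, h2⟩ := (mem_shuffle_iff _ _ _).mp hmem
    exact Prod.ext_iff.mpr ⟨h1.symm, h2.symm⟩

end IntegerRelations
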